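/- arXiv:1806.11465 — 3 statements merged into one kernel-verified Lean document; each statement's English description precedes it below -/
import Mathlib

section
/- Let G be a non-trivial finite simple graph of order n and maximum degree Δ, with no isolated vertices. If χ_NL(G) = k and Δ ≤ k − 1, then n ≤ k·(2^(k−1) − 1) and n ≤ k·∑_{j=1}^{Δ} C(k−1, j), where C(·,·) denotes the binomial coefficient. -/
open SimpleGraph

/-- A coloring `c : V → Fin k` is a *neighbor-locating coloring* of `G` if it is proper and
any two distinct vertices with the same color have different sets of colors on their
open neighborhoods. -/
def IsNLColoring {V : Type*} (G : SimpleGraph V) {k : ℕ} (c : V → Fin k) : Prop :=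
  (∀ u v : V, G.Adj u v → c u ≠ c v) ∧
  ∀ u v : V, u ≠ v → c u = c v → c '' (G.neighborSet u) ≠ c '' (G.neighborSet v)

/-- The neighbor-locating chromatic number: the least `k` admitting an NL-coloring. -/
noncomputable def nlChromaticNumber {V : Type*} (G : SimpleGraph V) : ℕ :=
  sInf {k : ℕ | ∃ c : V → Fin k, IsNLColoring G c}

/-
A vertex `v` of an NL-coloring is determined by its color `c v` together with the set of
colors on its neighborhood. That set avoids `c v`, is nonempty when `v` is not isolated, and
has at most `deg v ≤ Δ` elements; for each of the `k` colors there are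
`∑_{j=1}^{Δ} C(k-1, j)` such sets, and this sum is at most `2^(k-1) - 1` as `Δ ≤ k - 1`.
-/

open Finset

theorem Nat.sum_Icc_one_choose (m : ℕ) : ∑ j ∈ Icc 1 m, m.choose j = 2 ^ m - 1 := by
  rw [← Ico_add_one_right_eq_Icc, ← Nat.sum_range_choose, range_eq_Ico,
    sum_eq_sum_Ico_succ_bot m.succ_pos, Nat.choose_zero_right, add_tsub_cancel_left]
  rfl

theorem Finset.card_filter_powerset_nonempty_card_le {α : Type*} (A : Finset α) (d : ℕ) :
    #{s ∈ A.powerset | s.Nonempty ∧ #s ≤ d} = ∑ j ∈ Icc 1 d, (#A).choose j := by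
  rw [card_eq_sum_card_fiberwise (f := card) (t := Icc 1 d)]
  · refine sum_congr rfl fun j hj => ?_
    rw [← card_powersetCard, powersetCard_eq_filter, filter_filter]
    congr 1
    refine filter_congr fun s _ => ?_
    rw [mem_Icc] at hj
    constructor
    · exact fun h => h.2
    · rintro rfl
      exact ⟨⟨card_pos.mp hj.1, hj.2⟩, rfl⟩
  · intro s hs
    rw [mem_coe, mem_filter] at hs
    rw [mem_coe]
    exact mem_Icc.mpr ⟨card_pos.mpr hs.2.1, hs.2.2⟩

section NLColoring

variable {V : Type*} {G : SimpleGraph V} {k : ℕ} {c : V → Fin k}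

theorem isNLColoring_of_injective (hc : Function.Injective c) : IsNLColoring G c :=
  ⟨fun _ _ hadj hcol => G.ne_of_adj hadj (hc hcol), fun _ _ hne hcol _ => hne (hc hcol)⟩

theorem exists_isNLColoring_nlChromaticNumber [Finite V] (G : SimpleGraph V) :
    ∃ c : V → Fin (nlChromaticNumber G), IsNLColoring G c := by
  obtain ⟨n, ⟨e⟩⟩ := Finite.exists_equiv_fin V
  exact Nat.sInf_mem (s := {k : ℕ | ∃ c : V → Fin k, IsNLColoring G c})
    ⟨n, e, isNLColoring_of_injective e.injective⟩

variable [G.LocallyFinite]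

theorem IsNLColoring.eq_of_image_neighborFinset_eq (hc : IsNLColoring G c) {u v : V}
    (hcol : c u = c v) (himage : (G.neighborFinset u).image c = (G.neighborFinset v).image c) :
    u = v := by
  by_contra hne
  refine hc.2 u v hne hcol ?_
  simpa only [coe_image, coe_neighborFinset] using
    congrArg ((↑) : Finset (Fin k) → Set (Fin k)) himage

theorem IsNLColoring.image_neighborFinset_subset_erase (hc : IsNLColoring G c) (v : V) :
    (G.neighborFinset v).image c ⊆ univ.erase (c v) := by
  intro i hi
  obtain ⟨w, hw, rfl⟩ := mem_image.mp hi
  exact mem_erase.mpr ⟨(hc.1 v w ((G.mem_neighborFinset v w).mp hw)).symm, mem_univ _⟩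

theorem IsNLColoring.card_le_mul_sum_choose [Fintype V] (hc : IsNLColoring G c)
    (hiso : ∀ v : V, G.degree v ≠ 0) {d : ℕ} (hd : ∀ v : V, G.degree v ≤ d) :
    Fintype.card V ≤ k * ∑ j ∈ Icc 1 d, (k - 1).choose j := by
  let code : V → Σ _ : Fin k, Finset (Fin k) := fun v => ⟨c v, (G.neighborFinset v).image c⟩
  let codes : Finset (Σ _ : Fin k, Finset (Fin k)) :=
    univ.sigma fun i => {s ∈ (univ.erase i).powerset | s.Nonempty ∧ #s ≤ d}
  have code_mem : ∀ v, code v ∈ codes := fun v => by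
    refine mem_sigma.mpr ⟨mem_univ _, mem_filter.mpr ⟨mem_powerset.mpr
      (hc.image_neighborFinset_subset_erase v), ?_, ?_⟩⟩
    · exact (card_pos.mp (Nat.pos_of_ne_zero (hiso v))).image c
    · exact card_image_le.trans ((G.card_neighborFinset_eq_degree v).trans_le (hd v))
  have code_injective : Function.Injective code := fun u v h => by
    simp only [code, Sigma.mk.injEq, heq_eq_eq] at h
    exact hc.eq_of_image_neighborFinset_eq h.1 h.2
  calc Fintype.card V = #(univ.image code) := (card_image_of_injective _ code_injective).symm
    _ ≤ #codes := card_le_card (image_subset_iff.mpr fun v _ => code_mem v)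
    _ = k * ∑ j ∈ Icc 1 d, (k - 1).choose j := by
      simp only [codes, card_sigma, card_filter_powerset_nonempty_card_le,
        card_erase_of_mem (mem_univ _), card_univ, Fintype.card_fin, sum_const, smul_eq_mul]

end NLColoring

theorem card_le_of_nlChromaticNumber_eq_of_no_isolated_general
    {V : Type*} [Fintype V] (G : SimpleGraph V) [DecidableRel G.Adj]
    (hiso : ∀ v : V, G.degree v ≠ 0)
    (k : ℕ) (hk : nlChromaticNumber G = k) (hΔ : G.maxDegree ≤ k - 1) :
    Fintype.card V ≤ k * (2 ^ (k - 1) - 1) ∧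
      Fintype.card V ≤ k * ∑ j ∈ Finset.Icc 1 G.maxDegree, (k - 1).choose j := by
  obtain ⟨c, hc⟩ := hk ▸ exists_isNLColoring_nlChromaticNumber G
  have hcard := hc.card_le_mul_sum_choose hiso G.degree_le_maxDegree
  refine ⟨hcard.trans ?_, hcard⟩
  calc k * ∑ j ∈ Icc 1 G.maxDegree, (k - 1).choose j
      ≤ k * ∑ j ∈ Icc 1 (k - 1), (k - 1).choose j :=
        Nat.mul_le_mul_left k (sum_le_sum_of_subset (Icc_subset_Icc_right hΔ))
    _ = k * (2 ^ (k - 1) - 1) := by rw [Nat.sum_Icc_one_choose]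

/-- Bounds on the order of a non-trivial graph without isolated vertices in terms of its
NL-chromatic number `k` and maximum degree `Δ ≤ k - 1`. -/
theorem card_le_of_nlChromaticNumber_eq_of_no_isolated
    {V : Type*} [Fintype V] (G : SimpleGraph V) [DecidableRel G.Adj]
    (hn : 2 ≤ Fintype.card V) (hiso : ∀ v : V, G.degree v ≠ 0)
    (k : ℕ) (hk : nlChromaticNumber G = k) (hΔ : G.maxDegree ≤ k - 1) :
    Fintype.card V ≤ k * (2 ^ (k - 1) - 1) ∧
      Fintype.card V ≤ k * ∑ j ∈ Finset.Icc 1 G.maxDegree, (k - 1).choose j :=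
  card_le_of_nlChromaticNumber_eq_of_no_isolated_general G hiso k hk hΔ
end

section
/- For every integer k ≥ 3, there exists a graph G_k of order k·(2^(k−1) − 1) with χ_NL(G_k) = k such that every finite simple graph H with no isolated vertices satisfying χ_NL(H) = k is isomorphic to a subgraph of G_k (that is, there is an injective map f : V(H) → V(G_k) such that whenever u and v are adjacent in H, f(u) and f(v) are adjacent in G_k). -/
open SimpleGraph

/-!
In a neighbor-locating `k`-coloring `c` of a graph without isolated vertices, a vertex `v` is
determined by its code `(c v, c '' N(v))`: a color together with a nonempty set of colors not
containing it. There are `k (2^(k-1) - 1)` such codes, and joining `(i, S)` to `(j, T)` whenever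
`i ∈ T` and `j ∈ S` turns them into a graph into which every such graph maps injectively. The
first coordinate is a neighbor-locating `k`-coloring of this code graph, and no coloring with
fewer colors exists since it would give an injection into a smaller set of codes.
-/

section NLColoring

variable {V W : Type*} {G : SimpleGraph V} {G' : SimpleGraph W} {k : ℕ}

lemma IsNLColoring.comp_iso {c : W → Fin k} (hc : IsNLColoring G' c) (φ : G ≃g G') :
    IsNLColoring G (c ∘ φ) := by
  refine ⟨fun u v huv => hc.1 _ _ (φ.map_adj_iff.mpr huv), fun u v huv hcuv => ?_⟩
  rw [Set.image_comp, Set.image_comp, φ.image_neighborSet, φ.image_neighborSet]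
  exact hc.2 _ _ (φ.injective.ne huv) hcuv

lemma nlChromaticNumber_congr (φ : G ≃g G') : nlChromaticNumber G = nlChromaticNumber G' := by
  unfold nlChromaticNumber
  congr 1
  ext k
  exact ⟨fun ⟨c, hc⟩ => ⟨c ∘ φ.symm, hc.comp_iso φ.symm⟩, fun ⟨c, hc⟩ => ⟨c ∘ φ, hc.comp_iso φ⟩⟩

lemma nlChromaticNumber_le {c : V → Fin k} (hc : IsNLColoring G c) : nlChromaticNumber G ≤ k :=
  Nat.sInf_le ⟨c, hc⟩

lemma exists_isNLColoring_of_nlChromaticNumber_eq (h : nlChromaticNumber G = k) (hk : k ≠ 0) :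
    ∃ c : V → Fin k, IsNLColoring G c := by
  have hne := Nat.nonempty_of_pos_sInf (Nat.pos_of_ne_zero (h ▸ hk : nlChromaticNumber G ≠ 0))
  exact h ▸ Nat.sInf_mem hne

end NLColoring

abbrev NLCode (k : ℕ) := {p : Fin k × Finset (Fin k) // p.2.Nonempty ∧ p.1 ∉ p.2}

def nlCodeGraph (k : ℕ) : SimpleGraph (NLCode k) where
  Adj p q := p.1.1 ∈ q.1.2 ∧ q.1.1 ∈ p.1.2
  symm := ⟨fun _ _ h => ⟨h.2, h.1⟩⟩
  loopless := ⟨fun p h => p.2.2 h.1⟩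

lemma card_finset_nonempty_and_notMem {α : Type*} [Fintype α] [DecidableEq α] (a : α) :
    Fintype.card {S : Finset α // S.Nonempty ∧ a ∉ S} = 2 ^ (Fintype.card α - 1) - 1 := by
  have hfilter : Finset.univ.filter (fun S : Finset α => S.Nonempty ∧ a ∉ S) =
      (Finset.univ.erase a).powerset.erase ∅ := by
    ext S
    simp [Finset.nonempty_iff_ne_empty, Finset.subset_erase]
  rw [Fintype.card_subtype, hfilter, Finset.card_erase_of_mem (Finset.empty_mem_powerset _),
    Finset.card_powerset, Finset.card_erase_of_mem (Finset.mem_univ a), Finset.card_univ]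

lemma card_nlCode (k : ℕ) : Fintype.card (NLCode k) = k * (2 ^ (k - 1) - 1) := by
  let e : NLCode k ≃ Σ i : Fin k, {S : Finset (Fin k) // S.Nonempty ∧ i ∉ S} :=
    { toFun := fun p => ⟨p.1.1, p.1.2, p.2⟩
      invFun := fun x => ⟨(x.1, x.2.1), x.2.2⟩ }
  simp [Fintype.card_congr e, card_finset_nonempty_and_notMem]

lemma mul_two_pow_pred_sub_one_lt {m k : ℕ} (hk : 2 ≤ k) (hm : m < k) :
    m * (2 ^ (m - 1) - 1) < k * (2 ^ (k - 1) - 1) := by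
  have hpow : 2 ^ (m - 1) ≤ 2 ^ (k - 1) := Nat.pow_le_pow_right two_pos (by omega)
  have hpos : 2 ≤ 2 ^ (k - 1) := Nat.le_self_pow (by omega) 2
  calc m * (2 ^ (m - 1) - 1) ≤ (k - 1) * (2 ^ (k - 1) - 1) := by gcongr; omega
    _ < k * (2 ^ (k - 1) - 1) := Nat.mul_lt_mul_of_pos_right (by omega) (by omega)

section Code

variable {V : Type*} {G : SimpleGraph V} {k : ℕ} {c : V → Fin k}

noncomputable def nlCode (hG : ∀ v, (G.neighborSet v).Nonempty) (hc : IsNLColoring G c) :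
    G →g nlCodeGraph k where
  toFun v := ⟨(c v, (Set.toFinite (c '' G.neighborSet v)).toFinset),
    (Set.Finite.toFinset_nonempty _).mpr ((hG v).image c),
    fun h => by
      obtain ⟨u, hvu, hcu⟩ := (Set.Finite.mem_toFinset _).mp h
      exact hc.1 v u hvu hcu.symm⟩
  map_rel' {u v} huv := by
    simp only [nlCodeGraph, Set.Finite.mem_toFinset]
    exact ⟨⟨u, huv.symm, rfl⟩, ⟨v, huv, rfl⟩⟩

lemma nlCode_injective (hG : ∀ v, (G.neighborSet v).Nonempty) (hc : IsNLColoring G c) :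
    Function.Injective (nlCode hG hc) := by
  intro u v huv
  by_contra hne
  have hcol : c u = c v := congrArg (fun p => p.1.1) huv
  have hnbr := congrArg (fun p : NLCode k => (p.1.2 : Set (Fin k))) huv
  simp only [nlCode, RelHom.coeFn_mk, Set.Finite.coe_toFinset] at hnbr
  exact hc.2 u v hne hcol hnbr

lemma card_le_of_isNLColoring [Fintype V] (hG : ∀ v, (G.neighborSet v).Nonempty)
    (hc : IsNLColoring G c) : Fintype.card V ≤ k * (2 ^ (k - 1) - 1) :=
  card_nlCode k ▸ Fintype.card_le_of_injective _ (nlCode_injective hG hc)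

end Code

section CodeGraph

variable {k : ℕ}

/-- Each `j ∈ S` is realised by the neighbor `(j, {i})` of `(i, S)`. -/
lemma image_fst_neighborSet_nlCodeGraph (p : NLCode k) :
    (fun q : NLCode k => q.1.1) '' (nlCodeGraph k).neighborSet p = p.1.2 := by
  ext j
  refine ⟨fun ⟨q, hpq, hj⟩ => hj ▸ hpq.2, fun hj => ?_⟩
  have hji : j ≠ p.1.1 := fun h => p.2.2 (h ▸ hj)
  exact ⟨⟨(j, {p.1.1}), Finset.singleton_nonempty _, by simpa using hji⟩, ⟨by simp, hj⟩, rfl⟩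

lemma nlCodeGraph_neighborSet_nonempty (p : NLCode k) :
    ((nlCodeGraph k).neighborSet p).Nonempty := by
  obtain ⟨j, hj⟩ := p.2.1
  rw [← Finset.mem_coe, ← image_fst_neighborSet_nlCodeGraph] at hj
  obtain ⟨q, hq, -⟩ := hj
  exact ⟨q, hq⟩

lemma isNLColoring_fst_nlCodeGraph :
    IsNLColoring (nlCodeGraph k) (fun q : NLCode k => q.1.1) := by
  refine ⟨fun p q hpq hcol => q.2.2 (by simpa [hcol] using hpq.1), fun p q hpq hcol hnbr => hpq ?_⟩
  rw [image_fst_neighborSet_nlCodeGraph, image_fst_neighborSet_nlCodeGraph] at hnbr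
  exact Subtype.ext (Prod.ext hcol (Finset.coe_injective hnbr))

lemma nlChromaticNumber_nlCodeGraph (hk : 2 ≤ k) : nlChromaticNumber (nlCodeGraph k) = k := by
  refine le_antisymm (nlChromaticNumber_le isNLColoring_fst_nlCodeGraph)
    (le_csInf ⟨k, _, isNLColoring_fst_nlCodeGraph⟩ ?_)
  rintro m ⟨c, hc⟩
  by_contra! hm
  have hcard := card_le_of_isNLColoring nlCodeGraph_neighborSet_nonempty hc
  rw [card_nlCode] at hcard
  exact (mul_two_pow_pred_sub_one_lt hk hm).not_ge hcard

end CodeGraph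

/-- For every `k ≥ 3` there is a graph `Gk` of order `k(2^(k-1) - 1)` with
`χ_NL(Gk) = k` such that every finite graph `H` with no isolated vertices and
`χ_NL(H) = k` is isomorphic to a subgraph of `Gk`. -/
theorem exists_universal_graph_for_nlChromaticNumber (k : ℕ) (hk : 3 ≤ k) :
    ∃ Gk : SimpleGraph (Fin (k * (2 ^ (k - 1) - 1))),
      nlChromaticNumber Gk = k ∧
      ∀ (W : Type) [Fintype W] (H : SimpleGraph W),
        (∀ v : W, (H.neighborSet v).Nonempty) → nlChromaticNumber H = k →
        ∃ f : W → Fin (k * (2 ^ (k - 1) - 1)),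
          Function.Injective f ∧ ∀ u v : W, H.Adj u v → Gk.Adj (f u) (f v) := by
  let φ := Iso.map (Fintype.equivFinOfCardEq (card_nlCode k)) (nlCodeGraph k)
  refine ⟨_, (nlChromaticNumber_congr φ).symm.trans (nlChromaticNumber_nlCodeGraph (by omega)), ?_⟩
  intro W _ H hH hχ
  obtain ⟨c, hc⟩ := exists_isNLColoring_of_nlChromaticNumber_eq hχ (by omega)
  exact ⟨φ ∘ nlCode hH hc, φ.injective.comp (nlCode_injective hH hc),
    fun u v huv => φ.map_adj_iff.mpr ((nlCode hH hc).map_adj huv)⟩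
end

section
/- Let h and k be integers with 3 ≤ h ≤ k. Then for every integer ℓ with k ≤ ℓ ≤ k + h, there exist finite simple graphs G and H such that χ_NL(G) = k, χ_NL(H) = h, and χ_NL(G + H) = ℓ, where G + H denotes the disjoint union of G and H. -/
open SimpleGraph

/-!
The witnesses are `G = K_k + (ℓ - h) K_1` and `H = K_{h-1} + h K_1`. In an NL-coloring the
isolated vertices, all having the empty color neighborhood, get pairwise distinct colors, and
so do the vertices of a clique; this gives the lower bounds. Conversely, if a coloring is
injective on every closed neighborhood, the color set of `N(v)` has exactly `|N(v)|` elements,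
so two vertices of the same color are distinguished as soon as their degrees differ. In
`G + H` the degrees `k - 1`, `h - 2` and `0` are pairwise distinct, so the `ℓ` isolated
vertices can share their colors with the two cliques.
-/

open Function Set

variable {V W : Type*} {G : SimpleGraph V} {H : SimpleGraph W} {t : ℕ}

namespace IsNLColoring

theorem comp_iso_s16 {c : W → Fin t} (hc : IsNLColoring H c) (e : G ≃g H) :
    IsNLColoring G (c ∘ e) := by
  refine ⟨fun u v huv => hc.1 _ _ (e.map_adj_iff.mpr huv), fun u v huv hcuv himg => ?_⟩
  refine hc.2 (e u) (e v) (e.injective.ne huv) hcuv ?_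
  simpa only [image_comp, e.image_neighborSet] using himg

theorem injective_comp_of_pairwise_adj {c : V → Fin t} (hc : IsNLColoring G c) {α : Type*}
    {f : α → V} (hf : Pairwise fun i j => G.Adj (f i) (f j)) : Injective (c ∘ f) :=
  fun _ _ hij => by_contra fun hne => hc.1 _ _ (hf hne) hij

theorem injective_comp_of_isIsolated {c : V → Fin t} (hc : IsNLColoring G c)
    {α : Type*} {f : α → V} (hf : Injective f) (hiso : ∀ i, G.IsIsolated (f i)) :
    Injective (c ∘ f) := fun i j hij => by_contra fun hne => hc.2 _ _ (hf.ne hne) hij <| by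
  rw [(hiso i).neighborSet_eq_empty, (hiso j).neighborSet_eq_empty]

theorem of_ncard_neighborSet_ne {c : V → Fin t}
    (hloc : ∀ v, InjOn c (insert v (G.neighborSet v)))
    (hdeg : ∀ u v, u ≠ v → c u = c v →
      (G.neighborSet u).ncard ≠ (G.neighborSet v).ncard) :
    IsNLColoring G c := by
  refine ⟨fun u v huv hcuv => G.ne_of_adj huv ?_, fun u v huv hcuv himg => ?_⟩
  · exact hloc u (mem_insert u _) (mem_insert_of_mem u huv) hcuv
  · refine hdeg u v huv hcuv ?_
    rw [← ((hloc u).mono (subset_insert u _)).ncard_image,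
      ← ((hloc v).mono (subset_insert v _)).ncard_image, himg]

end IsNLColoring

theorem nlChromaticNumber_eq_of_isNLColoring {n : ℕ} {c : V → Fin n} (hc : IsNLColoring G c)
    (hmin : ∀ t (c' : V → Fin t), IsNLColoring G c' → n ≤ t) : nlChromaticNumber G = n :=
  le_antisymm (Nat.sInf_le ⟨c, hc⟩) (le_csInf ⟨n, c, hc⟩ fun t ⟨c', hc'⟩ => hmin t c' hc')

theorem SimpleGraph.Iso.nlChromaticNumber_eq (e : G ≃g H) :
    nlChromaticNumber G = nlChromaticNumber H := by
  unfold nlChromaticNumber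
  congr 1
  ext n
  exact ⟨fun ⟨c, hc⟩ => ⟨c ∘ e.symm, hc.comp_iso_s16 e.symm⟩, fun ⟨c, hc⟩ => ⟨c ∘ e, hc.comp_iso_s16 e⟩⟩

theorem injOn_insert_neighborSet_sum {α : Type*} {c : V ⊕ W → α}
    (hG : ∀ v, InjOn (c ∘ Sum.inl) (insert v (G.neighborSet v)))
    (hH : ∀ w, InjOn (c ∘ Sum.inr) (insert w (H.neighborSet w))) :
    ∀ x, InjOn c (insert x ((G ⊕g H).neighborSet x)) := by
  rintro (v | w)
  · rw [neighborSet_sum_inl, ← image_insert_eq]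
    exact (hG v).image_of_comp
  · rw [neighborSet_sum_inr, ← image_insert_eq]
    exact (hH w).image_of_comp

@[simp]
theorem ncard_neighborSet_sum_inl (v : V) :
    ((G ⊕g H).neighborSet (.inl v)).ncard = (G.neighborSet v).ncard := by
  rw [neighborSet_sum_inl, ncard_image_of_injective _ Sum.inl_injective]

@[simp]
theorem ncard_neighborSet_sum_inr (w : W) :
    ((G ⊕g H).neighborSet (.inr w)).ncard = (H.neighborSet w).ncard := by
  rw [neighborSet_sum_inr, ncard_image_of_injective _ Sum.inr_injective]

theorem SimpleGraph.IsIsolated.sum_inl {v : V} (hv : G.IsIsolated v) :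
    (G ⊕g H).IsIsolated (.inl v) := by
  rintro (w | w)
  exacts [by simpa using hv w, by simp]

theorem SimpleGraph.IsIsolated.sum_inr {w : W} (hw : H.IsIsolated w) :
    (G ⊕g H).IsIsolated (.inr w) := by
  rintro (v | v)
  exacts [by simp, by simpa using hw v]

def cliqueUnionIsolated (s p : ℕ) : SimpleGraph (Fin s ⊕ Fin p) :=
  (⊤ : SimpleGraph (Fin s)) ⊕g ⊥

namespace cliqueUnionIsolated

variable {s p : ℕ}

theorem adj_inl_inl {i j : Fin s} : (cliqueUnionIsolated s p).Adj (.inl i) (.inl j) ↔ i ≠ j :=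
  sum_adj_inl.trans (top_adj i j)

@[simp]
theorem isIsolated_inr (j : Fin p) : (cliqueUnionIsolated s p).IsIsolated (.inr j) := by
  rintro (_ | _) <;> simp [cliqueUnionIsolated]

@[simp]
theorem ncard_neighborSet_inl (i : Fin s) :
    ((cliqueUnionIsolated s p).neighborSet (.inl i)).ncard = s - 1 := by
  rw [cliqueUnionIsolated, neighborSet_sum_inl, ncard_image_of_injective _ Sum.inl_injective,
    neighborSet_top, ncard_compl, ncard_singleton, Nat.card_fin]

theorem injOn_insert_neighborSet {α : Type*} {c : Fin s ⊕ Fin p → α}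
    (hc : Injective (c ∘ Sum.inl)) :
    ∀ v, InjOn c (insert v ((cliqueUnionIsolated s p).neighborSet v)) := by
  rintro (i | j)
  · refine hc.injOn_range.mono ?_
    rw [cliqueUnionIsolated, neighborSet_sum_inl, ← image_insert_eq]
    exact image_subset_range _ _
  · simp

theorem max_le_of_isNLColoring {c : Fin s ⊕ Fin p → Fin t}
    (hc : IsNLColoring (cliqueUnionIsolated s p) c) : max s p ≤ t := by
  have hclique := Fintype.card_le_of_injective _
    (hc.injective_comp_of_pairwise_adj (f := Sum.inl) fun _ _ => adj_inl_inl.mpr)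
  have hiso := Fintype.card_le_of_injective _
    (hc.injective_comp_of_isIsolated Sum.inr_injective isIsolated_inr)
  simp only [Fintype.card_fin] at hclique hiso
  omega

end cliqueUnionIsolated

theorem nlChromaticNumber_cliqueUnionIsolated {s p : ℕ} (hs : 2 ≤ s) :
    nlChromaticNumber (cliqueUnionIsolated s p) = max s p := by
  set c : Fin s ⊕ Fin p → Fin (max s p) :=
    Sum.elim (Fin.castLE (le_max_left s p)) (Fin.castLE (le_max_right s p))
  have hc : IsNLColoring (cliqueUnionIsolated s p) c := by
    refine .of_ncard_neighborSet_ne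
      (cliqueUnionIsolated.injOn_insert_neighborSet (Fin.castLE_injective (le_max_left s p))) ?_
    rintro (i | i) (j | j) hij hcij <;> simp_all [c, Fin.ext_iff] <;> omega
  exact nlChromaticNumber_eq_of_isNLColoring hc fun _ _ =>
    cliqueUnionIsolated.max_le_of_isNLColoring

theorem nlChromaticNumber_cliqueUnionIsolated_sum {s p r q : ℕ} (hr : 2 ≤ r) (hrs : r < s)
    (hs : s ≤ p + q) :
    nlChromaticNumber (cliqueUnionIsolated s p ⊕g cliqueUnionIsolated r q) = p + q := by
  set c : (Fin s ⊕ Fin p) ⊕ (Fin r ⊕ Fin q) → Fin (p + q) :=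
    Sum.elim (Sum.elim (Fin.castLE hs) (Fin.castAdd q))
      (Sum.elim (Fin.castLE (by omega)) (Fin.natAdd p))
  have hc : IsNLColoring (cliqueUnionIsolated s p ⊕g cliqueUnionIsolated r q) c := by
    refine .of_ncard_neighborSet_ne (injOn_insert_neighborSet_sum
      (cliqueUnionIsolated.injOn_insert_neighborSet (Fin.castLE_injective hs))
      (cliqueUnionIsolated.injOn_insert_neighborSet (Fin.castLE_injective (by omega)))) ?_
    rintro ((i | i) | (i | i)) ((j | j) | (j | j)) hij hcij <;>
      simp_all [c, Fin.ext_iff] <;> omega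
  refine nlChromaticNumber_eq_of_isNLColoring hc fun t c' hc' => ?_
  have isolated : Injective
      (Sum.map Sum.inr Sum.inr : Fin p ⊕ Fin q → (Fin s ⊕ Fin p) ⊕ (Fin r ⊕ Fin q)) :=
    Sum.map_injective.mpr ⟨Sum.inr_injective, Sum.inr_injective⟩
  simpa using Fintype.card_le_of_injective _
    (hc'.injective_comp_of_isIsolated isolated (by
      rintro (j | j)
      exacts [(cliqueUnionIsolated.isIsolated_inr j).sum_inl,
        (cliqueUnionIsolated.isIsolated_inr j).sum_inr]))

/-- For `3 ≤ h ≤ k` and every `ℓ` with `k ≤ ℓ ≤ k + h`, there are graphs `G` and `H` with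
`χ_NL(G) = k`, `χ_NL(H) = h` and `χ_NL(G + H) = ℓ`. -/
theorem exists_graphs_nlChromaticNumber_sum_eq
    (h k : ℕ) (hh : 3 ≤ h) (hk : h ≤ k) :
    ∀ ℓ : ℕ, k ≤ ℓ → ℓ ≤ k + h →
      ∃ (n m : ℕ) (G : SimpleGraph (Fin n)) (H : SimpleGraph (Fin m)),
        nlChromaticNumber G = k ∧ nlChromaticNumber H = h ∧
        nlChromaticNumber (G ⊕g H) = ℓ := by
  intro ℓ hkℓ hℓ
  set G := cliqueUnionIsolated k (ℓ - h)
  set H := cliqueUnionIsolated (h - 1) h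
  refine ⟨_, _, G.overFin rfl, H.overFin rfl, ?_, ?_, ?_⟩
  · rw [← (G.overFinIso rfl).nlChromaticNumber_eq,
      nlChromaticNumber_cliqueUnionIsolated (by omega)]
    omega
  · rw [← (H.overFinIso rfl).nlChromaticNumber_eq,
      nlChromaticNumber_cliqueUnionIsolated (by omega)]
    omega
  · rw [← ((G.overFinIso rfl).sumCongr (H.overFinIso rfl)).nlChromaticNumber_eq,
      nlChromaticNumber_cliqueUnionIsolated_sum (by omega) (by omega) (by omega)]
    omega
end
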